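/- arXiv:1904.07140 — 2 statements merged into one kernel-verified Lean document; each statement's English description precedes it below -/
import Mathlib

section
/- Let m(z) satisfy 1 + z·m(z) + m(z)² = 0 with Im m(z)·Im z > 0. Then for z = E + iη ∈ S, |m′(z)| is comparable to 1/√(κ_E + η), where κ_E = min{|2−E|, |2+E|}; i.e. there are absolute constants c, C > 0 with c/√(κ_E+η) ≤ |m′(z)| ≤ C/√(κ_E+η). -/
/-!
Differentiating `1 + z m + m² = 0` gives `m' = -m / (z + 2m)`, and completing the square gives
`(z + 2m)² = (z - 2)(z + 2)`. Since `m (m + z) = -1`, `|m|` is bounded above and below on bounded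
sets, so `|m'| ≍ 1 / √(|z - 2| |z + 2|)`, and `|z - 2| |z + 2| ≍ κ_E + η` on `S`.
-/

open Complex Filter Topology

section SelfConsistentEquation

variable {z w : ℂ}

lemma ne_zero_of_semicircle_eq (h : 1 + z * w + w ^ 2 = 0) : w ≠ 0 := by
  rintro rfl
  norm_num at h

lemma norm_le_of_semicircle_eq (h : 1 + z * w + w ^ 2 = 0) : ‖w‖ ≤ ‖z‖ + 1 := by
  have hsq : ‖w‖ ^ 2 ≤ 1 + ‖z‖ * ‖w‖ :=
    calc ‖w‖ ^ 2 = ‖1 + z * w‖ := by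
          rw [← norm_pow, show w ^ 2 = -(1 + z * w) by linear_combination h, norm_neg]
      _ ≤ ‖(1 : ℂ)‖ + ‖z * w‖ := norm_add_le _ _
      _ = 1 + ‖z‖ * ‖w‖ := by rw [norm_one, norm_mul]
  nlinarith [norm_nonneg z, norm_nonneg w]

lemma inv_le_norm_of_semicircle_eq (h : 1 + z * w + w ^ 2 = 0) : (2 * ‖z‖ + 1)⁻¹ ≤ ‖w‖ := by
  have hprod : ‖w‖ * ‖w + z‖ = 1 := by
    rw [← norm_mul, show w * (w + z) = -1 by linear_combination h, norm_neg, norm_one]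
  have hpos : 0 < ‖w + z‖ := (norm_nonneg _).lt_of_ne fun h0 => by simp [← h0] at hprod
  have hle : ‖w + z‖ ≤ 2 * ‖z‖ + 1 :=
    (norm_add_le _ _).trans (by linarith [norm_le_of_semicircle_eq h])
  rw [eq_inv_of_mul_eq_one_left hprod]
  exact inv_anti₀ hpos hle

lemma norm_add_two_mul_sq_of_semicircle_eq (h : 1 + z * w + w ^ 2 = 0) :
    ‖z + 2 * w‖ ^ 2 = ‖z - 2‖ * ‖z + 2‖ := by
  rw [← norm_pow, ← norm_mul]
  congr 1
  linear_combination 4 * h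

end SelfConsistentEquation

section Derivative

variable {f : ℂ → ℂ} {f' z : ℂ}

lemma deriv_mul_eq_of_semicircle_eq (hf : ∀ᶠ w in 𝓝 z, 1 + w * f w + f w ^ 2 = 0)
    (hd : HasDerivAt f f' z) : f' * (z + 2 * f z) = -f z := by
  have hderiv : HasDerivAt (fun w => 1 + w * f w + f w ^ 2)
      (0 + (1 * f z + z * f') + (2 : ℕ) * f z ^ (2 - 1) * f') z :=
    ((hasDerivAt_const z 1).add ((hasDerivAt_id' z).mul hd)).add (hd.pow 2)
  have hzero : HasDerivAt (fun w => 1 + w * f w + f w ^ 2) 0 z :=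
    (hasDerivAt_const z 0).congr_of_eventuallyEq hf
  linear_combination hderiv.unique hzero

lemma norm_deriv_eq_of_semicircle_eq (hf : ∀ᶠ w in 𝓝 z, 1 + w * f w + f w ^ 2 = 0)
    (hd : HasDerivAt f f' z) : ‖f'‖ = ‖f z‖ / ‖z + 2 * f z‖ := by
  have hmul := deriv_mul_eq_of_semicircle_eq hf hd
  have hfz : f z ≠ 0 := ne_zero_of_semicircle_eq hf.self_of_nhds
  have hne : z + 2 * f z ≠ 0 := by
    intro h0
    rw [h0, mul_zero, zero_eq_neg] at hmul
    exact hfz hmul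
  rw [eq_div_iff (norm_ne_zero_iff.2 hne), ← norm_mul, hmul, norm_neg]

end Derivative

section EdgeDistance

lemma min_abs_add_abs_im_le_norm_mul_norm (z : ℂ) :
    min |2 - z.re| |2 + z.re| + |z.im| ≤ ‖z - 2‖ * ‖z + 2‖ := by
  have hsum : 4 ≤ |2 - z.re| + |2 + z.re| := by
    linarith [le_abs_self (2 - z.re), le_abs_self (2 + z.re)]
  have hre₁ : |2 - z.re| ≤ ‖z - 2‖ := by simpa [abs_sub_comm] using abs_re_le_norm (z - 2)
  have hre₂ : |2 + z.re| ≤ ‖z + 2‖ := by simpa [add_comm] using abs_re_le_norm (z + 2)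
  have him₁ : |z.im| ≤ ‖z - 2‖ := by simpa using abs_im_le_norm (z - 2)
  have him₂ : |z.im| ≤ ‖z + 2‖ := by simpa using abs_im_le_norm (z + 2)
  rcases le_total |2 - z.re| |2 + z.re| with h | h
  · rw [min_eq_left h]
    nlinarith [norm_nonneg (z - 2)]
  · rw [min_eq_right h]
    nlinarith [norm_nonneg (z + 2)]

lemma norm_mul_norm_le_min_abs_add_abs_im (z : ℂ) :
    ‖z - 2‖ * ‖z + 2‖ ≤ (min |2 - z.re| |2 + z.re| + |z.im|) * (‖z‖ + 2) := by
  have h₁ : ‖z - 2‖ ≤ |2 - z.re| + |z.im| := by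
    simpa [abs_sub_comm] using norm_le_abs_re_add_abs_im (z - 2)
  have h₂ : ‖z + 2‖ ≤ |2 + z.re| + |z.im| := by
    simpa [add_comm] using norm_le_abs_re_add_abs_im (z + 2)
  have h₃ : ‖z - 2‖ ≤ ‖z‖ + 2 := by simpa using norm_sub_le z 2
  have h₄ : ‖z + 2‖ ≤ ‖z‖ + 2 := by simpa using norm_add_le z 2
  rcases le_total |2 - z.re| |2 + z.re| with h | h
  · rw [min_eq_left h]
    exact mul_le_mul h₁ h₄ (norm_nonneg _) (by positivity)
  · rw [min_eq_right h, mul_comm ‖z - 2‖]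
    exact mul_le_mul h₂ h₃ (norm_nonneg _) (by positivity)

end EdgeDistance

/-- `|m′(z)| ≍ 1/√(κ_E + η)` on `S`, where `κ_E = min{|2−E|,|2+E|}`. -/
theorem stmt_1 (m m' : ℂ → ℂ)
    (hm : ∀ z : ℂ, z.im ≠ 0 →
      1 + z * m z + (m z) ^ 2 = 0 ∧ 0 < (m z).im * z.im ∧ HasDerivAt m (m' z) z) :
    ∃ c C : ℝ, 0 < c ∧ 0 < C ∧ ∀ E η : ℝ, |E| ≤ 4 → 0 < η → η ≤ 4 →
      c / Real.sqrt (min |2 - E| |2 + E| + η) ≤ ‖m' (E + η * I)‖ ∧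
      ‖m' (E + η * I)‖ ≤ C / Real.sqrt (min |2 - E| |2 + E| + η) := by
  refine ⟨1 / 68, 9, by norm_num, by norm_num, fun E η hE hη hη4 => ?_⟩
  set z : ℂ := E + η * I
  have hre : z.re = E := by simp [z]
  have him : z.im = η := by simp [z]
  have hnear : ∀ᶠ w in 𝓝 z, 1 + w * m w + m w ^ 2 = 0 :=
    (continuousAt_const.eventually_lt continuous_im.continuousAt (him ▸ hη)).mono
      fun w hw => (hm w hw.ne').1
  obtain ⟨hquad, -, hderiv⟩ := hm z (him ▸ hη.ne')
  have hz : ‖z‖ ≤ 8 :=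
    (norm_le_abs_re_add_abs_im z).trans (by rw [hre, him, abs_of_pos hη]; linarith)
  have hm_upper : ‖m z‖ ≤ 9 := by linarith [norm_le_of_semicircle_eq hquad]
  have hm_lower : 1 / 17 ≤ ‖m z‖ := by
    refine le_trans ?_ (inv_le_norm_of_semicircle_eq hquad)
    rw [one_div]
    exact inv_anti₀ (by positivity) (by linarith)
  set s := min |2 - E| |2 + E| + η
  have hs : 0 < s := by positivity
  have hκ : s = min |2 - z.re| |2 + z.re| + |z.im| := by rw [hre, him, abs_of_pos hη]
  have hst : s ≤ ‖z + 2 * m z‖ ^ 2 := by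
    rw [norm_add_two_mul_sq_of_semicircle_eq hquad, hκ]
    exact min_abs_add_abs_im_le_norm_mul_norm z
  have hts : ‖z + 2 * m z‖ ^ 2 ≤ (4 * √s) ^ 2 := by
    rw [norm_add_two_mul_sq_of_semicircle_eq hquad, mul_pow, Real.sq_sqrt hs.le]
    nlinarith [hκ ▸ norm_mul_norm_le_min_abs_add_abs_im z]
  have ht_lower : √s ≤ ‖z + 2 * m z‖ := (Real.sqrt_le_left (norm_nonneg _)).2 hst
  have ht_upper : ‖z + 2 * m z‖ ≤ 4 * √s :=
    (pow_le_pow_iff_left₀ (norm_nonneg _) (by positivity) two_ne_zero).1 hts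
  have hsqrt : 0 < √s := Real.sqrt_pos.2 hs
  rw [norm_deriv_eq_of_semicircle_eq hnear hderiv]
  constructor
  · calc 1 / 68 / √s = 1 / 17 / (4 * √s) := by ring
      _ ≤ ‖m z‖ / ‖z + 2 * m z‖ :=
        div_le_div₀ (norm_nonneg _) hm_lower (hsqrt.trans_le ht_lower) ht_upper
  · exact div_le_div₀ (by norm_num) hm_upper hsqrt ht_lower
end

section
/- Let h be a real random variable with E h = 0, E h² ≤ C₂/N, and E|h|^k ≤ C_k/(N q^{k−2}) for all k ≥ 3, where q = N^β with 0 < β < 1/2. Then the k-th cumulant of h satisfies |𝒞_k(h)| ≤ C′_k/(N q^{k−2}) for every k ≥ 2, where C′_k depends only on C₂,…,C_k. -/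
/-!
The moment–cumulant recursion expresses `κ (n+1)` as `M (n+1)` minus a sum of products
`κ (j+1) * M (n-j)` with both indices at least `2` (the terms with `κ 1 = M 1 = 0` drop out).
Every moment of order `m ≥ 2` has size `s m = 1/(N q^(m-2))` (`sparseScale N q m`), and because
`q² ≤ N` these sizes satisfy `s a * s b ≤ s (a + b)`; so by strong induction each product is
again of size `s (n+1)`, and so is `κ (n+1)`, with a constant depending only on `n` and the `C m`.
-/

open MeasureTheory Finset

def MomentCumulantRecursion (M κ : ℕ → ℝ) : Prop :=
  ∀ n, M (n + 1) = ∑ j ∈ range (n + 1), (n.choose j : ℝ) * κ (j + 1) * M (n - j)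

section MomentCumulant

variable {M κ : ℕ → ℝ}

theorem cumulant_succ_eq_moment_sub
    (hrec : MomentCumulantRecursion M κ) (hM0 : M 0 = 1) (n : ℕ) :
    κ (n + 1) = M (n + 1) - ∑ j ∈ range n, (n.choose j : ℝ) * κ (j + 1) * M (n - j) := by
  rw [hrec n, sum_range_succ, Nat.sub_self, hM0, Nat.choose_self]
  push_cast
  ring

theorem cumulant_one_eq_moment_one
    (hrec : MomentCumulantRecursion M κ) (hM0 : M 0 = 1) : κ 1 = M 1 := by
  simpa using cumulant_succ_eq_moment_sub hrec hM0 0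

variable {s : ℕ → ℝ} {A B : ℝ}

theorem abs_cumulant_succ_le (hrec : MomentCumulantRecursion M κ) (hM0 : M 0 = 1)
    (hM1 : M 1 = 0) (hs : ∀ m, 0 ≤ s m)
    (hs_mul : ∀ a b, 2 ≤ a → 2 ≤ b → s a * s b ≤ s (a + b)) (hA : 1 ≤ A) (hB : 0 ≤ B)
    {n : ℕ} (hn : 1 ≤ n) (hM : ∀ m, 2 ≤ m → m ≤ n + 1 → |M m| ≤ B * s m)
    (hκ : ∀ m, 2 ≤ m → m < n → |κ m| ≤ A ^ m * s m) :
    |κ (n + 1)| ≤ (B + 2 ^ n * A ^ (n - 1) * B) * s (n + 1) := by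
  have hκ1 : κ 1 = 0 := (cumulant_one_eq_moment_one hrec hM0).trans hM1
  have hterm : ∀ j ∈ range n,
      |(n.choose j : ℝ) * κ (j + 1) * M (n - j)| ≤ n.choose j * (A ^ (n - 1) * B * s (n + 1)) := by
    intro j hj
    have hj : j < n := mem_range.mp hj
    have hbound : 0 ≤ A ^ (n - 1) * B * s (n + 1) := by
      have := hs (n + 1); positivity
    rcases Nat.eq_zero_or_pos j with rfl | hj0
    · rw [hκ1, mul_zero, zero_mul, abs_zero]
      exact mul_nonneg (Nat.cast_nonneg _) hbound
    rcases eq_or_ne (n - j) 1 with hnj | hnj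
    · rw [hnj, hM1, mul_zero, abs_zero]
      exact mul_nonneg (Nat.cast_nonneg _) hbound
    rw [abs_mul, abs_mul, Nat.abs_cast, mul_assoc]
    refine mul_le_mul_of_nonneg_left ?_ (Nat.cast_nonneg _)
    calc |κ (j + 1)| * |M (n - j)| ≤ (A ^ (j + 1) * s (j + 1)) * (B * s (n - j)) :=
          mul_le_mul (hκ _ (by omega) (by omega)) (hM _ (by omega) (by omega)) (abs_nonneg _)
            (by have := hs (j + 1); positivity)
      _ = A ^ (j + 1) * B * (s (j + 1) * s (n - j)) := by ring
      _ ≤ A ^ (n - 1) * B * s (j + 1 + (n - j)) :=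
          mul_le_mul (mul_le_mul_of_nonneg_right (pow_le_pow_right₀ hA (by omega)) hB)
            (hs_mul _ _ (by omega) (by omega)) (mul_nonneg (hs _) (hs _))
            (mul_nonneg (pow_nonneg (zero_le_one.trans hA) _) hB)
      _ = A ^ (n - 1) * B * s (n + 1) := by rw [show j + 1 + (n - j) = n + 1 by omega]
  have hchoose : ∑ j ∈ range n, n.choose j ≤ 2 ^ n := by
    rw [← Nat.sum_range_choose n]
    exact sum_le_sum_of_subset (range_subset_range.mpr n.le_succ)
  calc |κ (n + 1)|
      ≤ |M (n + 1)| + ∑ j ∈ range n, |(n.choose j : ℝ) * κ (j + 1) * M (n - j)| := by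
        rw [cumulant_succ_eq_moment_sub hrec hM0]
        exact (abs_sub _ _).trans (add_le_add le_rfl (abs_sum_le_sum_abs _ _))
    _ ≤ B * s (n + 1) + (∑ j ∈ range n, (n.choose j : ℝ)) * (A ^ (n - 1) * B * s (n + 1)) := by
        rw [sum_mul]
        exact add_le_add (hM _ (by omega) le_rfl) (sum_le_sum hterm)
    _ ≤ B * s (n + 1) + 2 ^ n * (A ^ (n - 1) * B * s (n + 1)) := by
        have := hs (n + 1)
        gcongr
        exact_mod_cast hchoose
    _ = (B + 2 ^ n * A ^ (n - 1) * B) * s (n + 1) := by ring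

theorem add_two_pow_mul_pow_mul_le_pow {n : ℕ} (hn : 1 ≤ n) (hA : 1 ≤ A) (hB : 0 ≤ B)
    (hBA : 2 ^ (n + 1) * B ≤ A) : B + 2 ^ n * A ^ (n - 1) * B ≤ A ^ (n + 1) := by
  have h1 : (1 : ℝ) ≤ 2 ^ n * A ^ (n - 1) :=
    one_le_mul_of_one_le_of_one_le (one_le_pow₀ one_le_two) (one_le_pow₀ hA)
  calc B + 2 ^ n * A ^ (n - 1) * B ≤ 2 ^ n * A ^ (n - 1) * B + 2 ^ n * A ^ (n - 1) * B := by
        gcongr; exact le_mul_of_one_le_left hB h1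
    _ = A ^ (n - 1) * (2 ^ (n + 1) * B) := by ring
    _ ≤ A ^ (n - 1) * (A * A) :=
        mul_le_mul_of_nonneg_left (hBA.trans (le_mul_of_one_le_left (by linarith) hA))
          (pow_nonneg (by linarith) _)
    _ = A ^ (n + 1) := by rw [← pow_two, ← pow_add, show n - 1 + 2 = n + 1 by omega]

theorem abs_cumulant_le_of_abs_moment_le (hrec : MomentCumulantRecursion M κ) (hM0 : M 0 = 1)
    (hM1 : M 1 = 0) (hs : ∀ m, 0 ≤ s m)
    (hs_mul : ∀ a b, 2 ≤ a → 2 ≤ b → s a * s b ≤ s (a + b)) {k : ℕ}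
    (hM : ∀ m, 2 ≤ m → m ≤ k → |M m| ≤ B * s m) (hA : 1 ≤ A) (hB : 0 ≤ B)
    (hBA : 2 ^ k * B ≤ A) : ∀ m, 2 ≤ m → m ≤ k → |κ m| ≤ A ^ m * s m := by
  intro m
  induction m using Nat.strong_induction_on with
  | _ m ih =>
    intro hm hmk
    obtain ⟨n, rfl⟩ : ∃ n, m = n + 1 := ⟨m - 1, by omega⟩
    have hBA' : 2 ^ (n + 1) * B ≤ A :=
      le_trans (mul_le_mul_of_nonneg_right (pow_le_pow_right₀ one_le_two hmk) hB) hBA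
    calc |κ (n + 1)| ≤ (B + 2 ^ n * A ^ (n - 1) * B) * s (n + 1) :=
          abs_cumulant_succ_le hrec hM0 hM1 hs hs_mul hA hB (by omega)
            (fun m hm hmn => hM m hm (hmn.trans hmk))
            (fun m hm hmn => ih m (by omega) hm (by omega))
      _ ≤ A ^ (n + 1) * s (n + 1) := by
          gcongr
          · exact hs _
          · exact add_two_pow_mul_pow_mul_le_pow (by omega) hA hB hBA'

end MomentCumulant

noncomputable def sparseScale (N q : ℝ) (m : ℕ) : ℝ := (N * q ^ (m - 2))⁻¹

theorem sparseScale_nonneg {N q : ℝ} (hN : 0 ≤ N) (hq : 0 ≤ q) (m : ℕ) :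
    0 ≤ sparseScale N q m := by
  unfold sparseScale; positivity

theorem sparseScale_mul_le {N q : ℝ} (hq : 0 < q) (hqN : q ^ 2 ≤ N) {a b : ℕ} (ha : 2 ≤ a)
    (hb : 2 ≤ b) : sparseScale N q a * sparseScale N q b ≤ sparseScale N q (a + b) := by
  have hN : 0 < N := (pow_pos hq 2).trans_le hqN
  unfold sparseScale
  rw [← mul_inv]
  refine inv_anti₀ (by positivity) ?_
  calc N * q ^ (a + b - 2) = N * (q ^ (a - 2) * q ^ (b - 2)) * q ^ 2 := by
        rw [mul_assoc, ← pow_add, ← pow_add, show a - 2 + (b - 2) + 2 = a + b - 2 by omega]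
    _ ≤ N * (q ^ (a - 2) * q ^ (b - 2)) * N := by gcongr
    _ = N * q ^ (a - 2) * (N * q ^ (b - 2)) := by ring

theorem rpow_sq_le_self {N β : ℝ} (hN : 1 ≤ N) (hβ : β < 1 / 2) : (N ^ β) ^ 2 ≤ N := by
  rw [← Real.rpow_natCast, ← Real.rpow_mul (by linarith)]
  calc N ^ (β * (2 : ℕ)) ≤ N ^ (1 : ℝ) :=
        Real.rpow_le_rpow_of_exponent_le hN (by push_cast; linarith)
    _ = N := Real.rpow_one N

theorem abs_integral_pow_le_integral_abs_pow {Ω : Type*} [MeasurableSpace Ω] (μ : Measure Ω)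
    (h : Ω → ℝ) (m : ℕ) : |∫ ω, h ω ^ m ∂μ| ≤ ∫ ω, |h ω| ^ m ∂μ := by
  simpa [Real.norm_eq_abs, abs_pow] using norm_integral_le_integral_norm (fun ω => h ω ^ m)

theorem abs_integral_pow_le_mul_sparseScale {Ω : Type*} [MeasurableSpace Ω] {μ : Measure Ω}
    {h : Ω → ℝ} {C : ℕ → ℝ} {N q B : ℝ} (hN : 0 < N) (hq : 0 < q)
    (hE2 : ∫ ω, h ω ^ 2 ∂μ ≤ C 2 / N)
    (hEm : ∀ m : ℕ, 3 ≤ m → ∫ ω, |h ω| ^ m ∂μ ≤ C m / (N * q ^ (m - 2)))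
    {m : ℕ} (hm : 2 ≤ m) (hCB : C m ≤ B) : |∫ ω, h ω ^ m ∂μ| ≤ B * sparseScale N q m := by
  rw [sparseScale, ← div_eq_mul_inv]
  refine (abs_integral_pow_le_integral_abs_pow μ h m).trans ?_
  rcases hm.eq_or_lt with rfl | hm3
  · simp only [sq_abs, Nat.sub_self, pow_zero, mul_one]
    exact hE2.trans (div_le_div_of_nonneg_right hCB hN.le)
  · exact (hEm m hm3).trans (div_le_div_of_nonneg_right hCB (by positivity))

/-- cumulant bounds for sparse entries. If `E h = 0`, `E h² ≤ C₂/N` and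
`E|h|^k ≤ C_k/(N q^{k−2})` for `k ≥ 3` with `q = N^β`, `0 < β < 1/2`, then the `k`-th
cumulant (defined through the moment–cumulant recursion) satisfies
`|𝒞_k(h)| ≤ C′_k/(N q^{k−2})`, with `C′_k` depending only on `C₂,…,C_k`. -/
theorem stmt_8 (k : ℕ) (hk : 2 ≤ k) (C : ℕ → ℝ) :
    ∃ C' : ℝ, 0 < C' ∧
      ∀ (Ω : Type) (_ : MeasurableSpace Ω) (μ : Measure Ω), IsProbabilityMeasure μ →
      ∀ (h : Ω → ℝ), Measurable h →
      ∀ (N : ℕ) (β q : ℝ), 0 < N → 0 < β → β < 1 / 2 → q = (N : ℝ) ^ β →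
      (∀ m : ℕ, Integrable (fun ω => |h ω| ^ m) μ) →
      (∫ ω, h ω ∂μ) = 0 →
      (∫ ω, (h ω) ^ 2 ∂μ) ≤ C 2 / N →
      (∀ m : ℕ, 3 ≤ m → (∫ ω, |h ω| ^ m ∂μ) ≤ C m / (N * q ^ (m - 2))) →
      ∀ κ : ℕ → ℝ,
        (∀ n : ℕ, (∫ ω, (h ω) ^ (n + 1) ∂μ)
            = ∑ j ∈ Finset.range (n + 1),
                (n.choose j : ℝ) * κ (j + 1) * ∫ ω, (h ω) ^ (n - j) ∂μ) →
        |κ k| ≤ C' / (N * q ^ (k - 2)) := by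
  set B : ℝ := ∑ m ∈ range (k + 1), |C m|
  have hB : 0 ≤ B := sum_nonneg fun _ _ => abs_nonneg _
  have hCB : ∀ m ≤ k, C m ≤ B := fun m hm => (le_abs_self _).trans <|
    single_le_sum (f := fun i => |C i|) (fun _ _ => abs_nonneg _) (mem_range.mpr (by omega))
  set A : ℝ := 2 ^ k * (B + 1)
  have hA : 1 ≤ A := one_le_mul_of_one_le_of_one_le (one_le_pow₀ one_le_two) (by linarith)
  have hBA : 2 ^ k * B ≤ A := mul_le_mul_of_nonneg_left (by linarith) (by positivity)
  refine ⟨A ^ k, by positivity, ?_⟩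
  intro Ω _ μ _ h _ N β q hN _ hβ hq _ hE1 hE2 hEm κ hrec
  have hN1 : (1 : ℝ) ≤ N := by exact_mod_cast hN
  have hq0 : 0 < q := hq ▸ Real.rpow_pos_of_pos (by linarith) β
  have hqN : q ^ 2 ≤ N := hq ▸ rpow_sq_le_self hN1 hβ
  have hκ := abs_cumulant_le_of_abs_moment_le (M := fun m => ∫ ω, h ω ^ m ∂μ) hrec
    (by simp) (by simpa using hE1) (sparseScale_nonneg (by linarith) hq0.le)
    (fun a b => sparseScale_mul_le hq0 hqN)
    (fun m hm hmk => abs_integral_pow_le_mul_sparseScale (by linarith) hq0 hE2 hEm hm (hCB m hmk))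
    hA hB hBA k hk le_rfl
  rwa [sparseScale, ← div_eq_mul_inv] at hκ
end
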